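/- Let f(z) = z + ∑_{n=2}^∞ aₙ zⁿ be analytic on 𝔻 with |aₙ| ≤ n for all n ≥ 2, and suppose d(0, ∂f(𝔻)) ≥ 1/4. Let Φ : [0,1] → [0,∞) be continuous increasing and ω : 𝔻 → 𝔻 be a Schwarz-type function with |ω(z)| ≤ |z|. Set S_r/π = ∑_{n=1}^∞ n|aₙ|² r^{2n}. Then |ω(z)| + ∑_{n=2}^∞ |aₙ||ω(z)|ⁿ + Φ(|ω(z)|)·(S_r/π) ≤ d(0, ∂f(𝔻)) for all |z| = r ≤ R, where R is the unique root in (0,1) of r/(1−r)² + Φ(r)·r²(1+4r²+r⁴)/(1−r²)⁴ = 1/4. -/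

import Mathlib

/-!
Since `|aₙ| ≤ n`, both series are dominated termwise by the Koebe-function series
`∑ n ρⁿ = ρ/(1-ρ)²` and `∑ n³ ρ²ⁿ = ρ²(1+4ρ²+ρ⁴)/(1-ρ²)⁴`. As `|ω(z)| ≤ |z| ≤ R` and `Φ` is
monotone, the left-hand side is at most the value at `R` of the function defining `R`, which is
`1/4 ≤ d(0, ∂f(𝔻))`.
-/

open Set Metric

section PowerSeries

variable {𝕜 : Type*} [NormedField 𝕜] {r : 𝕜}

theorem hasSum_coe_add_two_mul_pow_add_two (hr : ‖r‖ < 1) :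
    HasSum (fun n : ℕ ↦ ((n : 𝕜) + 2) * r ^ (n + 2)) (r / (1 - r) ^ 2 - r) := by
  have h := (hasSum_nat_add_iff' (f := fun n : ℕ ↦ (n : 𝕜) * r ^ n) 2).2
    (hasSum_coe_mul_geometric_of_norm_lt_one hr)
  rw [show ∑ i ∈ Finset.range 2, (i : 𝕜) * r ^ i = r by simp [Finset.sum_range_succ]] at h
  refine h.congr_fun fun n ↦ ?_
  push_cast
  ring

theorem hasSum_coe_add_one_pow_three_mul_pow_succ (hr : ‖r‖ < 1) :
    HasSum (fun n : ℕ ↦ ((n : 𝕜) + 1) ^ 3 * r ^ (n + 1))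
      (r * (1 + 4 * r + r ^ 2) / (1 - r) ^ 4) := by
  have hchoose (k : ℕ) := hasSum_choose_mul_geometric_of_norm_lt_one k hr
  have hsum := (((hchoose 3).mul_left 6).sub ((hchoose 2).mul_left 6)).add (hchoose 1)
    |>.mul_left r
  have hr1 : 1 - r ≠ 0 := sub_ne_zero.2 fun h ↦ by simp [← h] at hr
  have hval : r * (6 * (1 / (1 - r) ^ (3 + 1)) - 6 * (1 / (1 - r) ^ (2 + 1))
      + 1 / (1 - r) ^ (1 + 1)) = r * (1 + 4 * r + r ^ 2) / (1 - r) ^ 4 := by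
    field_simp
    ring
  rw [hval] at hsum
  refine hsum.congr_fun fun n ↦ ?_
  -- `(n+1)³ = 6·C(n+3,3) - 6·C(n+2,2) + C(n+1,1)`
  have h3 := congrArg (Nat.cast (R := 𝕜)) (Nat.descFactorial_eq_factorial_mul_choose (n + 3) 3)
  have h2 := congrArg (Nat.cast (R := 𝕜)) (Nat.descFactorial_eq_factorial_mul_choose (n + 2) 2)
  simp only [Nat.descFactorial_succ, Nat.descFactorial_zero, Nat.factorial,
    Nat.choose_one_right] at h3 h2 ⊢
  push_cast at h3 h2 ⊢
  linear_combination (r * r ^ n) * h3 - 3 * (r * r ^ n) * h2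

end PowerSeries

theorem tsum_le_of_hasSum_of_nonneg_of_le {ι : Type*} {f g : ι → ℝ} {s : ℝ} (hg : HasSum g s)
    (hf : ∀ i, 0 ≤ f i) (hfg : ∀ i, f i ≤ g i) : ∑' i, f i ≤ s :=
  hg.tsum_eq ▸ (hg.summable.of_nonneg_of_le hf hfg).tsum_le_tsum hfg hg.summable

section CoefficientBounds

variable {E : Type*} [SeminormedAddGroup E] {a : ℕ → E} {r R : ℝ}

theorem tsum_norm_mul_pow_add_two_le (ha : ∀ n, 2 ≤ n → ‖a n‖ ≤ n) (hr : 0 ≤ r) (hrR : r ≤ R)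
    (hR : R < 1) : ∑' n : ℕ, ‖a (n + 2)‖ * r ^ (n + 2) ≤ R / (1 - R) ^ 2 - R := by
  have hR' : ‖R‖ < 1 := by rwa [Real.norm_of_nonneg (hr.trans hrR)]
  refine tsum_le_of_hasSum_of_nonneg_of_le (hasSum_coe_add_two_mul_pow_add_two hR')
    (fun n ↦ by positivity) fun n ↦ ?_
  have han : ‖a (n + 2)‖ ≤ (n : ℝ) + 2 := by exact_mod_cast ha (n + 2) (by omega)
  exact mul_le_mul han (pow_le_pow_left₀ hr hrR _) (by positivity) (by positivity)

theorem tsum_coe_mul_norm_sq_mul_pow_le (ha : ∀ n, 1 ≤ n → ‖a n‖ ≤ n) (hr : 0 ≤ r) (hrR : r ≤ R)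
    (hR : R < 1) :
    ∑' n : ℕ, ((n : ℝ) + 1) * ‖a (n + 1)‖ ^ 2 * r ^ (2 * (n + 1))
      ≤ R ^ 2 * (1 + 4 * R ^ 2 + R ^ 4) / (1 - R ^ 2) ^ 4 := by
  have hR2 : ‖R ^ 2‖ < 1 := by
    rw [Real.norm_of_nonneg (sq_nonneg R)]
    exact pow_lt_one₀ (hr.trans hrR) hR two_ne_zero
  have hsum := hasSum_coe_add_one_pow_three_mul_pow_succ hR2
  rw [show (R ^ 2) ^ 2 = R ^ 4 by ring] at hsum
  refine tsum_le_of_hasSum_of_nonneg_of_le hsum (fun n ↦ by positivity) fun n ↦ ?_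
  have han : ‖a (n + 1)‖ ≤ (n : ℝ) + 1 := by exact_mod_cast ha (n + 1) (by omega)
  calc ((n : ℝ) + 1) * ‖a (n + 1)‖ ^ 2 * r ^ (2 * (n + 1))
      ≤ ((n : ℝ) + 1) * ((n : ℝ) + 1) ^ 2 * R ^ (2 * (n + 1)) := by gcongr
    _ = ((n : ℝ) + 1) ^ 3 * (R ^ 2) ^ (n + 1) := by ring

end CoefficientBounds

theorem stmt7_general (f : ℂ → ℂ) (a : ℕ → ℂ) (ha1 : a 1 = 1)
    (ha : ∀ n, 2 ≤ n → ‖a n‖ ≤ (n : ℝ))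
    (hd : 1 / 4 ≤ infDist 0 (frontier (f '' ball 0 1)))
    (Φ : ℝ → ℝ)
    (hΦm : MonotoneOn Φ (Icc 0 1)) (hΦ0 : ∀ x ∈ Icc (0:ℝ) 1, 0 ≤ Φ x)
    (ω : ℂ → ℂ)
    (hω : ∀ z ∈ ball (0:ℂ) 1, ‖ω z‖ ≤ ‖z‖)
    (R : ℝ) (hR : R ∈ Ioo (0:ℝ) 1)
    (hroot : R / (1 - R) ^ 2
        + Φ R * (R ^ 2 * (1 + 4 * R ^ 2 + R ^ 4) / (1 - R ^ 2) ^ 4) = 1 / 4) :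
    ∀ z : ℂ, ‖z‖ ≤ R →
      ‖ω z‖ + (∑' n : ℕ, ‖a (n + 2)‖ * ‖ω z‖ ^ (n + 2))
        + Φ ‖ω z‖ * (∑' n : ℕ, ((n : ℝ) + 1) * ‖a (n + 1)‖ ^ 2 * ‖z‖ ^ (2 * (n + 1)))
      ≤ infDist 0 (frontier (f '' ball 0 1)) := by
  intro z hz
  obtain ⟨hR0, hR1⟩ := hR
  have hωR : ‖ω z‖ ≤ R := (hω z (mem_ball_zero_iff.2 (hz.trans_lt hR1))).trans hz
  have ha' : ∀ n, 1 ≤ n → ‖a n‖ ≤ n := fun n hn ↦ by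
    rcases hn.eq_or_lt with rfl | hn
    · simp [ha1]
    · exact ha n hn
  have hRIcc : R ∈ Icc (0 : ℝ) 1 := ⟨hR0.le, hR1.le⟩
  have hΦ : Φ ‖ω z‖ ≤ Φ R := hΦm ⟨norm_nonneg _, hωR.trans hR1.le⟩ hRIcc hωR
  calc _ ≤ R + (R / (1 - R) ^ 2 - R)
        + Φ R * (R ^ 2 * (1 + 4 * R ^ 2 + R ^ 4) / (1 - R ^ 2) ^ 4) := by
        gcongr ?_ + ?_ + ?_
        · exact tsum_norm_mul_pow_add_two_le ha (norm_nonneg _) hωR hR1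
        · exact mul_le_mul hΦ (tsum_coe_mul_norm_sq_mul_pow_le ha' (norm_nonneg _) hz hR1)
            (tsum_nonneg fun n ↦ by positivity) (hΦ0 R hRIcc)
    _ = 1 / 4 := by rw [← hroot]; ring
    _ ≤ _ := hd

theorem stmt7 (f : ℂ → ℂ) (a : ℕ → ℂ) (ha1 : a 1 = 1)
    (hf : AnalyticOn ℂ f (ball 0 1))
    (hrep : ∀ z ∈ ball (0:ℂ) 1, f z = ∑' n : ℕ, a (n + 1) * z ^ (n + 1))
    (ha : ∀ n, 2 ≤ n → ‖a n‖ ≤ (n : ℝ))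
    (hd : 1 / 4 ≤ infDist 0 (frontier (f '' ball 0 1)))
    (Φ : ℝ → ℝ) (hΦc : ContinuousOn Φ (Icc 0 1))
    (hΦm : MonotoneOn Φ (Icc 0 1)) (hΦ0 : ∀ x ∈ Icc (0:ℝ) 1, 0 ≤ Φ x)
    (ω : ℂ → ℂ) (hωmap : ∀ z ∈ ball (0:ℂ) 1, ω z ∈ ball (0:ℂ) 1)
    (hω : ∀ z ∈ ball (0:ℂ) 1, ‖ω z‖ ≤ ‖z‖)
    (R : ℝ) (hR : R ∈ Ioo (0:ℝ) 1)
    (hroot : R / (1 - R) ^ 2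
        + Φ R * (R ^ 2 * (1 + 4 * R ^ 2 + R ^ 4) / (1 - R ^ 2) ^ 4) = 1 / 4)
    (huniq : ∀ r ∈ Ioo (0:ℝ) 1,
      r / (1 - r) ^ 2
        + Φ r * (r ^ 2 * (1 + 4 * r ^ 2 + r ^ 4) / (1 - r ^ 2) ^ 4) = 1 / 4 → r = R) :
    ∀ z : ℂ, ‖z‖ ≤ R →
      ‖ω z‖ + (∑' n : ℕ, ‖a (n + 2)‖ * ‖ω z‖ ^ (n + 2))
        + Φ ‖ω z‖ * (∑' n : ℕ, ((n : ℝ) + 1) * ‖a (n + 1)‖ ^ 2 * ‖z‖ ^ (2 * (n + 1)))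
      ≤ infDist 0 (frontier (f '' ball 0 1)) :=
  stmt7_general f a ha1 ha hd Φ hΦm hΦ0 ω hω R hR hroot
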